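/- Two-stage instrumental ridge regression error bound (explicit deterministic form of the main theorem): Let λ > 0, c, η, ζ_xx, ζ_xy, ζ_yy, C > 0. Let Σ_x, Σ_y be symmetric positive semidefinite matrices, V a matrix with ‖V‖ ≤ 1 such that Σ_yx = Σ_y^{1/2} V Σ_x^{1/2}, and W a matrix with Σ_yx = W Σ_x. Let x̄_t, x̂_t ∈ ℝ^{d_x}, ȳ_t, ŷ_t ∈ ℝ^{d_y} (t = 1,…,N) satisfy ‖x̄_t‖ ≤ c, ‖ȳ_t‖ ≤ c, ‖x̂_t − x̄_t‖ ≤ η, ‖ŷ_t − ȳ_t‖ ≤ η, and suppose ‖(1/N)∑_t x̄_t x̄_tᵀ − Σ_x‖ ≤ ζ_xx, ‖(1/N)∑_t ȳ_t x̄_tᵀ − Σ_yx‖ ≤ ζ_xy, and ‖(1/N)∑_t ȳ_t ȳ_tᵀ‖ ≤ λ_max(Σ_y) + ζ_yy. Define Ŵ_λ = ((1/N)∑_t ŷ_t x̂_tᵀ)·((1/N)∑_t x̂_t x̂_tᵀ + λI)^{−1}. Then for every x_test = Σ_x^{1/2} v with ‖x_test‖ ≤ 1 and ‖v‖ ≤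 C: ‖Ŵ_λ x_test − W x_test‖ ≤ √(λ_max(Σ_y) + ζ_yy)·(2cη + η²)·λ^{−3/2} + (2cη + η²)/λ + √(λ_max(Σ_y))·ζ_xx·λ^{−3/2} + ζ_xy/λ + (1/2)·√λ·‖W‖_F·C. -/

import Mathlib

open scoped Matrix.Norms.L2Operator

/-- The positive semidefinite square root of a positive semidefinite matrix (the definition
`Matrix.PosSemidef.sqrt` of the older Mathlib, which has since been removed). -/
noncomputable def Matrix.PosSemidef.sqrt {n : Type*} [Fintype n] [DecidableEq n]
    {A : Matrix n n ℝ} (hA : A.PosSemidef) : Matrix n n ℝ :=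
  hA.1.eigenvectorUnitary.1 * Matrix.diagonal ((↑) ∘ Real.sqrt ∘ hA.1.eigenvalues) *
    (star hA.1.eigenvectorUnitary : Matrix n n ℝ)

/-- The largest eigenvalue of a real symmetric matrix, expressed as the supremum of the
Rayleigh quotient `⟪x, A x⟫` over the unit sphere of Euclidean space. -/
noncomputable def lamMax {n : Type*} [Fintype n] [DecidableEq n]
    (A : Matrix n n ℝ) : ℝ :=
  ⨆ x : Metric.sphere (0 : EuclideanSpace ℝ n) 1,
    inner (𝕜 := ℝ) (x : EuclideanSpace ℝ n) (Matrix.toEuclideanLin A x)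

/-- The Frobenius (Hilbert–Schmidt) norm of a real matrix. -/
noncomputable def frobNorm {m n : Type*} [Fintype m] [Fintype n]
    (A : Matrix m n ℝ) : ℝ :=
  Real.sqrt (∑ i, ∑ j, A i j ^ 2)

/-! The error `Ŵ_λ − W` telescopes through the oracle ridge estimator `Σ̄_yx (Σ̄_x + λ)⁻¹` built
from the denoised samples and the population ridge estimator `Σ_yx (Σ_x + λ)⁻¹`. Both first
differences have the resolvent form `C₁ R₁ − C₂ R₂ = (C₁ − C₂) R₁ + C₂ R₂ (M₂ − M₁) R₁`, and
`‖C₂ (M₂ + λ)⁻¹‖ ≤ √K / (2√λ)` as soon as `‖C₂ u‖² ≤ K ⟪u, M₂ u⟫`: for the empirical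
covariances this is Cauchy–Schwarz over the samples, for `Σ_yx = Σ_y^{1/2} V Σ_x^{1/2}` it is
the factorization. The last difference is the ridge bias `−λ W (Σ_x + λ)⁻¹`, which is small on
the range of `Σ_x^{1/2}` because `‖(Σ_x + λ)⁻¹ Σ_x^{1/2}‖ ≤ 1 / (2√λ)`. -/

open Matrix
open scoped RealInnerProductSpace

section InnerProductSpace

variable {E : Type*} [NormedAddCommGroup E] [InnerProductSpace ℝ E]

theorem four_mul_mul_inner_le_norm_add_smul_sq (lam : ℝ) (p u : E) :
    4 * lam * ⟪u, p⟫ ≤ ‖p + lam • u‖ ^ 2 := by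
  have hadd := norm_add_sq_real p (lam • u)
  have hsub := norm_sub_sq_real p (lam • u)
  rw [real_inner_smul_right, real_inner_comm] at hadd hsub
  nlinarith [sq_nonneg ‖p - lam • u‖]

theorem mul_norm_le_norm_add_smul {lam : ℝ} (hlam : 0 ≤ lam) {p u : E} (hpu : 0 ≤ ⟪u, p⟫) :
    lam * ‖u‖ ≤ ‖p + lam • u‖ := by
  refine (sq_le_sq₀ (by positivity) (norm_nonneg _)).1 ?_
  rw [norm_add_sq_real, real_inner_smul_right, real_inner_comm, norm_smul,
    Real.norm_of_nonneg hlam]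
  nlinarith [sq_nonneg ‖p‖]

end InnerProductSpace

theorem norm_inv_natCast_smul_sum_le {E : Type*} [SeminormedAddCommGroup E] [NormedSpace ℝ E]
    {N : ℕ} {f : Fin N → E} {B : ℝ} (hB : 0 ≤ B) (hf : ∀ t, ‖f t‖ ≤ B) :
    ‖(N : ℝ)⁻¹ • ∑ t, f t‖ ≤ B := by
  rcases N.eq_zero_or_pos with rfl | hN
  · simpa using hB
  rw [norm_smul, Real.norm_of_nonneg (by positivity), inv_mul_le_iff₀ (by positivity)]
  simpa using (norm_sum_le _ _).trans (Finset.sum_le_card_nsmul Finset.univ _ _ fun t _ => hf t)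

theorem div_two_mul_mul_sqrt_le_mul_rpow {lam X : ℝ} (hlam : 0 < lam) (hX : 0 ≤ X) :
    X / (2 * lam * √lam) ≤ X * lam ^ (-(3 : ℝ) / 2) := by
  rw [neg_div, Real.rpow_neg hlam.le, Real.sqrt_eq_rpow, show (3 : ℝ) / 2 = 1 + 1 / 2 by norm_num,
    Real.rpow_one_add' hlam.le (by norm_num), div_eq_mul_inv]
  gcongr
  linarith [Real.rpow_pos_of_pos hlam (1 / 2)]

namespace Matrix

variable {m n p : Type*}

theorem PosSemidef.posDef_add_smul_one [DecidableEq n] {M : Matrix n n ℝ} (hM : M.PosSemidef)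
    {lam : ℝ} (hlam : 0 < lam) : (M + lam • 1).PosDef :=
  PosDef.posSemidef_add hM (PosDef.one.smul hlam)

section Algebra

variable [Fintype n] [DecidableEq n]

theorem toEuclideanLin_mul_apply [Fintype p] [DecidableEq p] (A : Matrix m n ℝ)
    (B : Matrix n p ℝ) (x : EuclideanSpace ℝ p) :
    toEuclideanLin (A * B) x = toEuclideanLin A (toEuclideanLin B x) := by
  simp [toLpLin_mul_same]

noncomputable def ridge (lam : ℝ) (C : Matrix m n ℝ) (M : Matrix n n ℝ) : Matrix m n ℝ :=
  C * (M + lam • 1)⁻¹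

variable {lam : ℝ}

theorem ridge_sub_ridge {M₁ M₂ : Matrix n n ℝ} (hM₁ : M₁.PosSemidef) (hM₂ : M₂.PosSemidef)
    (hlam : 0 < lam) (C₁ C₂ : Matrix m n ℝ) :
    ridge lam C₁ M₁ - ridge lam C₂ M₂
      = (C₁ - C₂) * (M₁ + lam • 1)⁻¹ + C₂ * (M₂ + lam • 1)⁻¹ * (M₂ - M₁) * (M₁ + lam • 1)⁻¹ := by
  have h₁ := mul_nonsing_inv _ ((isUnit_iff_isUnit_det _).1 (hM₁.posDef_add_smul_one hlam).isUnit)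
  have h₂ := nonsing_inv_mul _ ((isUnit_iff_isUnit_det _).1 (hM₂.posDef_add_smul_one hlam).isUnit)
  have hM : M₂ - M₁ = (M₂ + lam • 1) - (M₁ + lam • 1) := by abel
  rw [ridge, ridge, hM, Matrix.mul_sub, Matrix.sub_mul, Matrix.sub_mul,
    Matrix.mul_assoc C₂ _ (M₂ + lam • 1), h₂, Matrix.mul_one,
    Matrix.mul_assoc (C₂ * _) (M₁ + lam • 1), h₁, Matrix.mul_one]
  abel

theorem ridge_mul_self_sub {M : Matrix n n ℝ} (hM : M.PosSemidef) (hlam : 0 < lam)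
    (W : Matrix m n ℝ) : ridge lam (W * M) M - W = -lam • (W * (M + lam • 1)⁻¹) := by
  have h := mul_nonsing_inv _ ((isUnit_iff_isUnit_det _).1 (hM.posDef_add_smul_one hlam).isUnit)
  have hMR : M * (M + lam • 1)⁻¹ = 1 - lam • (M + lam • 1)⁻¹ :=
    eq_sub_of_add_eq (by simpa only [Matrix.add_mul, Matrix.smul_mul, Matrix.one_mul] using h)
  rw [ridge, Matrix.mul_assoc, hMR, Matrix.mul_sub, Matrix.mul_one, Matrix.mul_smul, neg_smul]
  abel

end Algebra

variable [Fintype m] [Fintype n] [DecidableEq n]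

theorem norm_toEuclideanLin_le (A : Matrix m n ℝ) (x : EuclideanSpace ℝ n) :
    ‖toEuclideanLin A x‖ ≤ ‖A‖ * ‖x‖ :=
  A.l2_opNorm_mulVec x

theorem l2_opNorm_le_of_forall_le (A : Matrix m n ℝ) {K : ℝ} (hK : 0 ≤ K)
    (h : ∀ x, ‖toEuclideanLin A x‖ ≤ K * ‖x‖) : ‖A‖ ≤ K := by
  rw [l2_opNorm_def]
  exact ContinuousLinearMap.opNorm_le_bound _ hK h

theorem norm_toEuclideanLin_sub_le (A B P W : Matrix m n ℝ) (S : Matrix n n ℝ)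
    {v x : EuclideanSpace ℝ n} (hx : x = toEuclideanLin S v) (hx1 : ‖x‖ ≤ 1) :
    ‖toEuclideanLin A x - toEuclideanLin W x‖ ≤ ‖A - B‖ + ‖B - P‖ + ‖(P - W) * S‖ * ‖v‖ := by
  have hsplit : toEuclideanLin A x - toEuclideanLin W x
      = toEuclideanLin (A - B) x + toEuclideanLin (B - P) x + toEuclideanLin ((P - W) * S) v := by
    rw [toEuclideanLin_mul_apply, ← hx]
    simp only [map_sub, LinearMap.sub_apply]
    abel
  rw [hsplit]
  refine norm_add₃_le.trans (add_le_add_three ?_ ?_ (norm_toEuclideanLin_le _ _)) <;>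
    exact (norm_toEuclideanLin_le _ _).trans (mul_le_of_le_one_right (norm_nonneg _) hx1)

theorem l2_opNorm_le_frobNorm (A : Matrix m n ℝ) : ‖A‖ ≤ frobNorm A := by
  refine l2_opNorm_le_of_forall_le _ (Real.sqrt_nonneg _) fun x => ?_
  rw [EuclideanSpace.norm_eq, EuclideanSpace.norm_eq, frobNorm, ← Real.sqrt_mul (by positivity)]
  refine Real.sqrt_le_sqrt ?_
  simp only [Real.norm_eq_abs, sq_abs]
  rw [Finset.sum_mul]
  refine Finset.sum_le_sum fun i _ => ?_
  simpa [mulVec, dotProduct] using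
    Finset.sum_mul_sq_le_sq_mul_sq Finset.univ (A i) (fun j => x j)

theorem toEuclideanLin_vecMulVec_apply [DecidableEq m] (a : EuclideanSpace ℝ m)
    (b z : EuclideanSpace ℝ n) : toEuclideanLin (vecMulVec a b) z = ⟪b, z⟫ • a := by
  have h := InnerProductSpace.symm_toEuclideanLin_rankOne (𝕜 := ℝ) a b
  rw [star_trivial, LinearEquiv.symm_apply_eq] at h
  rw [← h]
  rfl

theorem norm_vecMulVec_le [DecidableEq m] (a : EuclideanSpace ℝ m) (b : EuclideanSpace ℝ n) :
    ‖vecMulVec a b‖ ≤ ‖a‖ * ‖b‖ := by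
  refine l2_opNorm_le_of_forall_le _ (by positivity) fun z => ?_
  rw [toEuclideanLin_vecMulVec_apply, norm_smul, Real.norm_eq_abs, mul_comm, mul_assoc]
  gcongr
  exact abs_real_inner_le_norm b z

variable {M : Matrix n n ℝ} {lam : ℝ}

theorem PosSemidef.inner_toEuclideanLin_self_nonneg (hM : M.PosSemidef)
    (u : EuclideanSpace ℝ n) : 0 ≤ ⟪u, toEuclideanLin M u⟫ :=
  (isPositive_toEuclideanLin_iff.2 hM).inner_nonneg_right u

theorem PosSemidef.add_smul_one_inv_apply (hM : M.PosSemidef) (hlam : 0 < lam)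
    (z : EuclideanSpace ℝ n) :
    toEuclideanLin M (toEuclideanLin (M + lam • 1)⁻¹ z) + lam • toEuclideanLin (M + lam • 1)⁻¹ z
      = z := by
  have h := mul_nonsing_inv _ ((isUnit_iff_isUnit_det _).1 (hM.posDef_add_smul_one hlam).isUnit)
  simpa [toEuclideanLin_mul_apply] using congrArg (toEuclideanLin · z) h

theorem PosSemidef.norm_add_smul_one_inv_le (hM : M.PosSemidef) (hlam : 0 < lam) :
    ‖(M + lam • 1)⁻¹‖ ≤ lam⁻¹ := by
  refine l2_opNorm_le_of_forall_le _ (inv_nonneg.2 hlam.le) fun z => ?_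
  rw [inv_mul_eq_div, le_div_iff₀' hlam]
  conv_rhs => rw [← hM.add_smul_one_inv_apply hlam z]
  exact mul_norm_le_norm_add_smul hlam.le (hM.inner_toEuclideanLin_self_nonneg _)

theorem PosSemidef.norm_mul_add_smul_one_inv_le (hM : M.PosSemidef) (hlam : 0 < lam)
    {A : Matrix m n ℝ} {K : ℝ} (hK : 0 ≤ K)
    (hA : ∀ u, ‖toEuclideanLin A u‖ ^ 2 ≤ K * ⟪u, toEuclideanLin M u⟫) :
    ‖A * (M + lam • 1)⁻¹‖ ≤ √K / (2 * √lam) := by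
  refine l2_opNorm_le_of_forall_le _ (by positivity) fun z => ?_
  rw [toEuclideanLin_mul_apply]
  have hz := hM.add_smul_one_inv_apply hlam z
  set u := toEuclideanLin (M + lam • 1)⁻¹ z
  have hu := four_mul_mul_inner_le_norm_add_smul_sq lam (toEuclideanLin M u) u
  rw [hz] at hu
  refine (sq_le_sq₀ (norm_nonneg _) (by positivity)).1 ((hA u).trans ?_)
  rw [div_mul_eq_mul_div, div_pow, mul_pow, mul_pow, Real.sq_sqrt hK, Real.sq_sqrt hlam.le,
    le_div_iff₀ (by positivity)]
  nlinarith [hM.inner_toEuclideanLin_self_nonneg u]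

theorem PosSemidef.sqrt_eq_cfc (hM : M.PosSemidef) : hM.sqrt = cfc Real.sqrt M := by
  rw [hM.1.cfc_eq, IsHermitian.cfc, Unitary.conjStarAlgAut_apply]
  rfl

theorem PosSemidef.isHermitian_sqrt (hM : M.PosSemidef) : hM.sqrt.IsHermitian := by
  rw [hM.sqrt_eq_cfc]
  exact cfc_predicate _ _

theorem PosSemidef.sqrt_mul_self (hM : M.PosSemidef) : hM.sqrt * hM.sqrt = M := by
  rw [hM.sqrt_eq_cfc, ← cfc_mul Real.sqrt Real.sqrt M]
  conv_rhs => rw [← cfc_id ℝ M hM.1]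
  exact cfc_congr fun x hx => Real.mul_self_sqrt
    ((posSemidef_iff_isHermitian_and_spectrum_nonneg.1 hM).2 hx)

theorem PosSemidef.norm_sqrt_apply_sq (hM : M.PosSemidef) (u : EuclideanSpace ℝ n) :
    ‖toEuclideanLin hM.sqrt u‖ ^ 2 = ⟪u, toEuclideanLin M u⟫ := by
  rw [← real_inner_self_eq_norm_sq, ← isSymmetric_toEuclideanLin_iff.2 hM.isHermitian_sqrt,
    ← toEuclideanLin_mul_apply, hM.sqrt_mul_self, real_inner_comm]

theorem inner_le_lamMax_mul_norm_sq (A : Matrix n n ℝ) (z : EuclideanSpace ℝ n) :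
    ⟪z, toEuclideanLin A z⟫ ≤ lamMax A * ‖z‖ ^ 2 := by
  rcases eq_or_ne z 0 with rfl | hz
  · simp
  have hbdd : BddAbove (Set.range fun x : Metric.sphere (0 : EuclideanSpace ℝ n) 1 =>
      ⟪(x : EuclideanSpace ℝ n), toEuclideanLin A x⟫) := by
    refine ⟨‖A‖, Set.forall_mem_range.2 fun x => ?_⟩
    have hx : ‖(x : EuclideanSpace ℝ n)‖ = 1 := by simp
    calc _ ≤ ‖(x : EuclideanSpace ℝ n)‖ * ‖toEuclideanLin A x‖ := real_inner_le_norm _ _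
      _ ≤ ‖(x : EuclideanSpace ℝ n)‖ * (‖A‖ * ‖(x : EuclideanSpace ℝ n)‖) := by
          gcongr; exact norm_toEuclideanLin_le A _
      _ = ‖A‖ := by rw [hx]; ring
  have hnorm : 0 < ‖z‖ := norm_pos_iff.2 hz
  have hle := le_ciSup hbdd ⟨‖z‖⁻¹ • z, by simp [norm_smul, hnorm.ne']⟩
  simp only [map_smul, real_inner_smul_left, real_inner_smul_right] at hle
  rwa [← mul_assoc, ← sq, ← le_div_iff₀' (by positivity), inv_pow, div_inv_eq_mul] at hle

theorem PosSemidef.lamMax_nonneg (hM : M.PosSemidef) : 0 ≤ lamMax M :=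
  Real.iSup_nonneg fun x => hM.inner_toEuclideanLin_self_nonneg x

theorem PosSemidef.norm_sqrt_le (hM : M.PosSemidef) : ‖hM.sqrt‖ ≤ √(lamMax M) := by
  refine l2_opNorm_le_of_forall_le _ (Real.sqrt_nonneg _) fun z => ?_
  refine (sq_le_sq₀ (norm_nonneg _) (by positivity)).1 ?_
  rw [hM.norm_sqrt_apply_sq, mul_pow, Real.sq_sqrt hM.lamMax_nonneg]
  exact inner_le_lamMax_mul_norm_sq M z

theorem PosSemidef.norm_add_smul_one_inv_mul_sqrt_le (hM : M.PosSemidef) (hlam : 0 < lam) :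
    ‖(M + lam • 1)⁻¹ * hM.sqrt‖ ≤ 1 / (2 * √lam) := by
  have h := hM.norm_mul_add_smul_one_inv_le hlam (A := hM.sqrt) zero_le_one
    fun u => by rw [one_mul, hM.norm_sqrt_apply_sq]
  rwa [Real.sqrt_one, ← l2_opNorm_conjTranspose, conjTranspose_mul,
    (hM.posDef_add_smul_one hlam).isHermitian.inv.eq, hM.isHermitian_sqrt.eq] at h

theorem norm_ridge_sub_ridge_le {M₁ M₂ : Matrix n n ℝ} (hM₁ : M₁.PosSemidef)
    (hM₂ : M₂.PosSemidef) (hlam : 0 < lam) (C₁ C₂ : Matrix m n ℝ) {K : ℝ} (hK : 0 ≤ K)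
    (hC₂ : ∀ u, ‖toEuclideanLin C₂ u‖ ^ 2 ≤ K * ⟪u, toEuclideanLin M₂ u⟫) :
    ‖ridge lam C₁ M₁ - ridge lam C₂ M₂‖
      ≤ ‖C₁ - C₂‖ / lam + √K * ‖M₁ - M₂‖ / (2 * lam * √lam) := by
  have hR₁ := hM₁.norm_add_smul_one_inv_le hlam
  have hCR₂ := hM₂.norm_mul_add_smul_one_inv_le hlam hK hC₂
  rw [ridge_sub_ridge hM₁ hM₂ hlam, norm_sub_rev M₁]
  calc _ ≤ ‖C₁ - C₂‖ * ‖(M₁ + lam • 1)⁻¹‖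
        + ‖C₂ * (M₂ + lam • 1)⁻¹‖ * ‖M₂ - M₁‖ * ‖(M₁ + lam • 1)⁻¹‖ :=
        (norm_add_le _ _).trans (add_le_add (l2_opNorm_mul _ _)
          ((l2_opNorm_mul _ _).trans (by gcongr; exact l2_opNorm_mul _ _)))
    _ ≤ ‖C₁ - C₂‖ * lam⁻¹ + √K / (2 * √lam) * ‖M₂ - M₁‖ * lam⁻¹ := by gcongr
    _ = _ := by field_simp

theorem norm_ridge_mul_self_sub_mul_sqrt_le (hM : M.PosSemidef) (hlam : 0 < lam)
    (W : Matrix m n ℝ) : ‖(ridge lam (W * M) M - W) * hM.sqrt‖ ≤ √lam * ‖W‖ / 2 := by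
  rw [ridge_mul_self_sub hM hlam, smul_mul, norm_smul, Real.norm_eq_abs, abs_neg,
    abs_of_pos hlam, Matrix.mul_assoc]
  calc lam * ‖W * ((M + lam • 1)⁻¹ * hM.sqrt)‖ ≤ lam * (‖W‖ * (1 / (2 * √lam))) := by
        gcongr
        exact (l2_opNorm_mul _ _).trans
          (by gcongr; exact hM.norm_add_smul_one_inv_mul_sqrt_le hlam)
    _ = √lam * ‖W‖ / 2 := by
        field_simp
        rw [Real.sq_sqrt hlam.le, mul_comm]

theorem norm_sqrt_mul_mul_sqrt_apply_sq_le [DecidableEq m] {Sy : Matrix m m ℝ}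
    (hSy : Sy.PosSemidef) (hM : M.PosSemidef) {V : Matrix m n ℝ} (hV : ‖V‖ ≤ 1)
    (u : EuclideanSpace ℝ n) :
    ‖toEuclideanLin (hSy.sqrt * V * hM.sqrt) u‖ ^ 2 ≤ lamMax Sy * ⟪u, toEuclideanLin M u⟫ := by
  rw [← hM.norm_sqrt_apply_sq, ← Real.sq_sqrt hSy.lamMax_nonneg, ← mul_pow]
  gcongr
  calc _ ≤ ‖hSy.sqrt * V‖ * ‖toEuclideanLin hM.sqrt u‖ := by
        rw [toEuclideanLin_mul_apply]; exact norm_toEuclideanLin_le _ _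
    _ ≤ √(lamMax Sy) * ‖toEuclideanLin hM.sqrt u‖ := by
        gcongr
        exact (l2_opNorm_mul _ _).trans ((mul_le_mul hSy.norm_sqrt_le hV (norm_nonneg _)
          (Real.sqrt_nonneg _)).trans_eq (mul_one _))

end Matrix

noncomputable def empCov {m n : Type*} {N : ℕ} (y : Fin N → EuclideanSpace ℝ m)
    (x : Fin N → EuclideanSpace ℝ n) : Matrix m n ℝ :=
  (N : ℝ)⁻¹ • ∑ t, vecMulVec (y t) (x t)

theorem empCov.posSemidef {n : Type*} [Fintype n] {N : ℕ} (x : Fin N → EuclideanSpace ℝ n) :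
    (empCov x x).PosSemidef :=
  (posSemidef_sum _ fun t _ => by
    simpa using posSemidef_vecMulVec_self_star (x t : n → ℝ)).smul (by positivity)

namespace empCov

variable {m n : Type*} [Fintype m] [Fintype n] [DecidableEq m] [DecidableEq n] {N : ℕ}

theorem inner_toEuclideanLin (y : Fin N → EuclideanSpace ℝ m) (x : Fin N → EuclideanSpace ℝ n)
    (a : EuclideanSpace ℝ m) (b : EuclideanSpace ℝ n) :
    ⟪a, toEuclideanLin (empCov y x) b⟫ = (N : ℝ)⁻¹ * ∑ t, ⟪a, y t⟫ * ⟪x t, b⟫ := by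
  simp only [empCov, map_smul, map_sum, LinearMap.smul_apply, LinearMap.coe_sum, Finset.sum_apply,
    toEuclideanLin_vecMulVec_apply, real_inner_smul_right, inner_sum, mul_comm]

theorem inner_sq_le (y : Fin N → EuclideanSpace ℝ m) (x : Fin N → EuclideanSpace ℝ n)
    (a : EuclideanSpace ℝ m) (b : EuclideanSpace ℝ n) :
    ⟪a, toEuclideanLin (empCov y x) b⟫ ^ 2
      ≤ ⟪a, toEuclideanLin (empCov y y) a⟫ * ⟪b, toEuclideanLin (empCov x x) b⟫ := by
  simp only [inner_toEuclideanLin, real_inner_comm a, real_inner_comm b, ← sq]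
  rw [mul_pow, mul_mul_mul_comm, ← sq]
  gcongr
  exact Finset.sum_mul_sq_le_sq_mul_sq _ _ _

theorem norm_apply_sq_le (y : Fin N → EuclideanSpace ℝ m) (x : Fin N → EuclideanSpace ℝ n)
    (u : EuclideanSpace ℝ n) :
    ‖toEuclideanLin (empCov y x) u‖ ^ 2 ≤ ‖empCov y y‖ * ⟪u, toEuclideanLin (empCov x x) u⟫ := by
  set q := toEuclideanLin (empCov y x) u
  have hu := (posSemidef x).inner_toEuclideanLin_self_nonneg u
  have hq : ⟪q, toEuclideanLin (empCov y y) q⟫ ≤ ‖empCov y y‖ * ‖q‖ ^ 2 :=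
    (real_inner_le_norm _ _).trans
      (by nlinarith [norm_toEuclideanLin_le (empCov y y) q, norm_nonneg q])
  have h := inner_sq_le y x q u
  rw [real_inner_self_eq_norm_sq] at h
  rcases (sq_nonneg ‖q‖).eq_or_lt with h0 | h0
  · rw [← h0]; positivity
  · refine le_of_mul_le_mul_right ?_ h0
    nlinarith [mul_le_mul_of_nonneg_right hq hu]

variable {c η : ℝ} {y y' : Fin N → EuclideanSpace ℝ m} {x x' : Fin N → EuclideanSpace ℝ n}

theorem norm_sub_le (hc : 0 ≤ c) (hη : 0 ≤ η) (hy : ∀ t, ‖y t‖ ≤ c) (hx : ∀ t, ‖x t‖ ≤ c)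
    (hy' : ∀ t, ‖y' t - y t‖ ≤ η) (hx' : ∀ t, ‖x' t - x t‖ ≤ η) :
    ‖empCov y' x' - empCov y x‖ ≤ 2 * c * η + η ^ 2 := by
  have hterm : ∀ t, ‖vecMulVec (y' t) (x' t) - vecMulVec (y t) (x t)‖ ≤ 2 * c * η + η ^ 2 := by
    intro t
    have hx't : ‖x' t‖ ≤ c + η :=
      (norm_le_norm_add_norm_sub' (x' t) (x t)).trans (add_le_add (hx t) (hx' t))
    have hsplit : vecMulVec (y' t) (x' t) - vecMulVec (y t) (x t)
        = vecMulVec (y' t - y t) (x' t) + vecMulVec (y t) (x' t - x t) := by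
      simp only [WithLp.ofLp_sub, sub_vecMulVec, vecMulVec_sub]
      abel
    rw [hsplit]
    calc _ ≤ ‖y' t - y t‖ * ‖x' t‖ + ‖y t‖ * ‖x' t - x t‖ :=
          (norm_add_le _ _).trans (add_le_add (norm_vecMulVec_le _ _) (norm_vecMulVec_le _ _))
      _ ≤ η * (c + η) + c * η := by gcongr; exacts [hy' t, hy t, hx' t]
      _ = 2 * c * η + η ^ 2 := by ring
  rw [empCov, empCov, ← smul_sub, ← Finset.sum_sub_distrib]
  exact norm_inv_natCast_smul_sum_le (by positivity) hterm

theorem norm_ridge_sub_ridge_le {lam K : ℝ} (hlam : 0 < lam) (hc : 0 ≤ c) (hη : 0 ≤ η)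
    (hy : ∀ t, ‖y t‖ ≤ c) (hx : ∀ t, ‖x t‖ ≤ c)
    (hy' : ∀ t, ‖y' t - y t‖ ≤ η) (hx' : ∀ t, ‖x' t - x t‖ ≤ η) (hK : ‖empCov y y‖ ≤ K) :
    ‖ridge lam (empCov y' x') (empCov x' x') - ridge lam (empCov y x) (empCov x x)‖
      ≤ (2 * c * η + η ^ 2) / lam + √K * (2 * c * η + η ^ 2) / (2 * lam * √lam) := by
  refine (Matrix.norm_ridge_sub_ridge_le (posSemidef x') (posSemidef x) hlam _ _
    ((norm_nonneg _).trans hK) fun u => (norm_apply_sq_le y x u).trans ?_).trans ?_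
  · gcongr
    exact (posSemidef x).inner_toEuclideanLin_self_nonneg u
  · gcongr
    exacts [norm_sub_le hc hη hy hx hy' hx', norm_sub_le hc hη hx hx hx' hx']

end empCov

theorem two_stage_ridge_error_general {dx dy N : ℕ}
    (lam c η ζxx ζxy ζyy C : ℝ)
    (hlam : 0 < lam) (hc : 0 < c) (hη : 0 < η)
    (Sx : Matrix (Fin dx) (Fin dx) ℝ) (Sy : Matrix (Fin dy) (Fin dy) ℝ)
    (hSx : Sx.PosSemidef) (hSy : Sy.PosSemidef)
    (V : Matrix (Fin dy) (Fin dx) ℝ) (hV : ‖V‖ ≤ 1)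
    (Syx : Matrix (Fin dy) (Fin dx) ℝ) (hSyx : Syx = hSy.sqrt * V * hSx.sqrt)
    (W : Matrix (Fin dy) (Fin dx) ℝ) (hW : Syx = W * Sx)
    (xbar xhat : Fin N → EuclideanSpace ℝ (Fin dx))
    (ybar yhat : Fin N → EuclideanSpace ℝ (Fin dy))
    (hx : ∀ t, ‖xbar t‖ ≤ c) (hy : ∀ t, ‖ybar t‖ ≤ c)
    (hxe : ∀ t, ‖xhat t - xbar t‖ ≤ η) (hye : ∀ t, ‖yhat t - ybar t‖ ≤ η)
    (hcovx : ‖(N : ℝ)⁻¹ • (∑ t, Matrix.vecMulVec (xbar t) (xbar t)) - Sx‖ ≤ ζxx)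
    (hcovyx : ‖(N : ℝ)⁻¹ • (∑ t, Matrix.vecMulVec (ybar t) (xbar t)) - Syx‖ ≤ ζxy)
    (hcovy : ‖(N : ℝ)⁻¹ • (∑ t, Matrix.vecMulVec (ybar t) (ybar t))‖ ≤ lamMax Sy + ζyy)
    (What : Matrix (Fin dy) (Fin dx) ℝ)
    (hWhat : What = ((N : ℝ)⁻¹ • ∑ t, Matrix.vecMulVec (yhat t) (xhat t)) *
      ((N : ℝ)⁻¹ • (∑ t, Matrix.vecMulVec (xhat t) (xhat t)) + lam • 1)⁻¹) :
    ∀ v : EuclideanSpace ℝ (Fin dx), ∀ xtest : EuclideanSpace ℝ (Fin dx),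
      xtest = Matrix.toEuclideanLin hSx.sqrt v → ‖xtest‖ ≤ 1 → ‖v‖ ≤ C →
      ‖Matrix.toEuclideanLin What xtest - Matrix.toEuclideanLin W xtest‖ ≤
        Real.sqrt (lamMax Sy + ζyy) * (2 * c * η + η ^ 2) * lam ^ (-(3 : ℝ) / 2) +
          (2 * c * η + η ^ 2) / lam +
          Real.sqrt (lamMax Sy) * ζxx * lam ^ (-(3 : ℝ) / 2) + ζxy / lam +
          1 / 2 * Real.sqrt lam * frobNorm W * C := by
  intro v xtest hxtest hxtest_le hv
  have hbias : ‖(ridge lam Syx Sx - W) * hSx.sqrt‖ ≤ √lam * frobNorm W / 2 :=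
    hW ▸ (norm_ridge_mul_self_sub_mul_sqrt_le hSx hlam W).trans
      (by gcongr; exact l2_opNorm_le_frobNorm W)
  set Wbar := ridge lam (empCov ybar xbar) (empCov xbar xbar)
  set Wpop := ridge lam Syx Sx
  have hstage1 : ‖What - Wbar‖ ≤ (2 * c * η + η ^ 2) / lam
      + √(lamMax Sy + ζyy) * (2 * c * η + η ^ 2) / (2 * lam * √lam) :=
    hWhat ▸ empCov.norm_ridge_sub_ridge_le hlam hc.le hη.le hy hx hye hxe hcovy
  have hsample : ‖Wbar - Wpop‖ ≤ ζxy / lam + √(lamMax Sy) * ζxx / (2 * lam * √lam) :=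
    (norm_ridge_sub_ridge_le (empCov.posSemidef xbar) hSx hlam _ _ hSy.lamMax_nonneg
      (hSyx ▸ norm_sqrt_mul_mul_sqrt_apply_sq_le hSy hSx hV)).trans
        (by gcongr; exacts [hcovyx, hcovx])
  have hζxx : 0 ≤ ζxx := (norm_nonneg _).trans hcovx
  calc _ ≤ ‖What - Wbar‖ + ‖Wbar - Wpop‖ + ‖(Wpop - W) * hSx.sqrt‖ * ‖v‖ :=
        norm_toEuclideanLin_sub_le _ _ _ _ _ hxtest hxtest_le
    _ ≤ ((2 * c * η + η ^ 2) / lam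
          + √(lamMax Sy + ζyy) * (2 * c * η + η ^ 2) / (2 * lam * √lam))
        + (ζxy / lam + √(lamMax Sy) * ζxx / (2 * lam * √lam)) + √lam * frobNorm W / 2 * C := by
        gcongr
        exact (norm_nonneg _).trans hbias
    _ ≤ _ := by
        linarith [div_two_mul_mul_sqrt_le_mul_rpow hlam
            (by positivity : 0 ≤ √(lamMax Sy + ζyy) * (2 * c * η + η ^ 2)),
          div_two_mul_mul_sqrt_le_mul_rpow hlam (by positivity : 0 ≤ √(lamMax Sy) * ζxx)]

/-- **Two-stage instrumental ridge regression error bound** (explicit deterministic form of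
the main theorem). Under Stage-1 error bounds `η`, empirical covariance error bounds
`ζ_xx, ζ_xy, ζ_yy`, a factorization `Σ_yx = Σ_y^{1/2} V Σ_x^{1/2}` with `‖V‖ ≤ 1`, and
`Σ_yx = W Σ_x`, the Stage-2 ridge estimator `Ŵ_λ` satisfies, for every
`x_test = Σ_x^{1/2} v` with `‖x_test‖ ≤ 1` and `‖v‖ ≤ C`:
`‖Ŵ_λ x_test − W x_test‖ ≤ √(λ_max(Σ_y) + ζ_yy)·(2cη + η²)·λ^{−3/2} + (2cη + η²)/λ
+ √(λ_max(Σ_y))·ζ_xx·λ^{−3/2} + ζ_xy/λ + (1/2)·√λ·‖W‖_F·C`. -/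
theorem two_stage_ridge_error {dx dy N : ℕ}
    (lam c η ζxx ζxy ζyy C : ℝ)
    (hlam : 0 < lam) (hc : 0 < c) (hη : 0 < η)
    (hζxx : 0 < ζxx) (hζxy : 0 < ζxy) (hζyy : 0 < ζyy) (hC : 0 < C)
    (Sx : Matrix (Fin dx) (Fin dx) ℝ) (Sy : Matrix (Fin dy) (Fin dy) ℝ)
    (hSx : Sx.PosSemidef) (hSy : Sy.PosSemidef)
    (V : Matrix (Fin dy) (Fin dx) ℝ) (hV : ‖V‖ ≤ 1)
    (Syx : Matrix (Fin dy) (Fin dx) ℝ) (hSyx : Syx = hSy.sqrt * V * hSx.sqrt)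
    (W : Matrix (Fin dy) (Fin dx) ℝ) (hW : Syx = W * Sx)
    (xbar xhat : Fin N → EuclideanSpace ℝ (Fin dx))
    (ybar yhat : Fin N → EuclideanSpace ℝ (Fin dy))
    (hx : ∀ t, ‖xbar t‖ ≤ c) (hy : ∀ t, ‖ybar t‖ ≤ c)
    (hxe : ∀ t, ‖xhat t - xbar t‖ ≤ η) (hye : ∀ t, ‖yhat t - ybar t‖ ≤ η)
    (hcovx : ‖(N : ℝ)⁻¹ • (∑ t, Matrix.vecMulVec (xbar t) (xbar t)) - Sx‖ ≤ ζxx)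
    (hcovyx : ‖(N : ℝ)⁻¹ • (∑ t, Matrix.vecMulVec (ybar t) (xbar t)) - Syx‖ ≤ ζxy)
    (hcovy : ‖(N : ℝ)⁻¹ • (∑ t, Matrix.vecMulVec (ybar t) (ybar t))‖ ≤ lamMax Sy + ζyy)
    (What : Matrix (Fin dy) (Fin dx) ℝ)
    (hWhat : What = ((N : ℝ)⁻¹ • ∑ t, Matrix.vecMulVec (yhat t) (xhat t)) *
      ((N : ℝ)⁻¹ • (∑ t, Matrix.vecMulVec (xhat t) (xhat t)) + lam • 1)⁻¹) :
    ∀ v : EuclideanSpace ℝ (Fin dx), ∀ xtest : EuclideanSpace ℝ (Fin dx),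
      xtest = Matrix.toEuclideanLin hSx.sqrt v → ‖xtest‖ ≤ 1 → ‖v‖ ≤ C →
      ‖Matrix.toEuclideanLin What xtest - Matrix.toEuclideanLin W xtest‖ ≤
        Real.sqrt (lamMax Sy + ζyy) * (2 * c * η + η ^ 2) * lam ^ (-(3 : ℝ) / 2) +
          (2 * c * η + η ^ 2) / lam +
          Real.sqrt (lamMax Sy) * ζxx * lam ^ (-(3 : ℝ) / 2) + ζxy / lam +
          1 / 2 * Real.sqrt lam * frobNorm W * C :=
  two_stage_ridge_error_general lam c η ζxx ζxy ζyy C hlam hc hη Sx Sy hSx hSy V hV Syx hSyx W hW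
    xbar xhat ybar yhat hx hy hxe hye hcovx hcovyx hcovy What hWhat
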